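/- Let n ≥ 1 and let g be the Minkowski bilinear form on ℝ^(n+1). The timecone τ = {x : g(x,x) < 0} is the union of the two disjoint, nonempty, open sets τ⁺ = {x ∈ τ : x 0 > 0} and τ⁻ = {x ∈ τ : x 0 < 0}, each of which is connected; consequently τ has exactly two connected components, namely τ⁺ and τ⁻. -/

import Mathlib

/-- The Minkowski bilinear form on `ℝ^(n+1)`:
`g x y = -x 0 * y 0 + ∑_{i=1}^{n} x i * y i`. -/
noncomputable def minkowskiForm (n : ℕ) (x y : Fin (n + 1) → ℝ) : ℝ :=
  -(x 0 * y 0) + ∑ i : Fin n, x i.succ * y i.succ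

open Set

/-- the spatial part, as an element of Euclidean space -/
noncomputable def spatialPart (n : ℕ) (x : Fin (n + 1) → ℝ) : EuclideanSpace ℝ (Fin n) :=
  WithLp.toLp 2 fun i => x i.succ

lemma norm_spatialPart_sq (n : ℕ) (x : Fin (n + 1) → ℝ) :
    ‖spatialPart n x‖ ^ 2 = ∑ i : Fin n, x i.succ * x i.succ := by
  rw [EuclideanSpace.norm_eq, Real.sq_sqrt (by positivity)]
  simp [spatialPart, sq, abs_mul_abs_self]

lemma mink_iff (n : ℕ) (x : Fin (n + 1) → ℝ) (t : ℝ) (ht : t ^ 2 = x 0 ^ 2) :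
    (minkowskiForm n x x < 0 ∧ 0 < t) ↔ ‖spatialPart n x‖ < t := by
  have h := norm_spatialPart_sq n x
  have hnn : (0:ℝ) ≤ ‖spatialPart n x‖ := norm_nonneg _
  unfold minkowskiForm
  constructor
  · rintro ⟨h1, h2⟩
    nlinarith [h1, h2]
  · intro h1
    constructor
    · nlinarith
    · linarith

lemma convex_cone (n : ℕ) (s : ℝ) :
    Convex ℝ {x : Fin (n + 1) → ℝ | ‖spatialPart n x‖ < s * x 0} := by
  rintro x hx y hy a b ha hb hab
  simp only [mem_setOf_eq] at hx hy ⊢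
  have hsp : spatialPart n (a • x + b • y) = a • spatialPart n x + b • spatialPart n y := rfl
  have htr : ‖spatialPart n (a • x + b • y)‖ ≤ a * ‖spatialPart n x‖ + b * ‖spatialPart n y‖ := by
    rw [hsp]
    calc ‖a • spatialPart n x + b • spatialPart n y‖
        ≤ ‖a • spatialPart n x‖ + ‖b • spatialPart n y‖ := norm_add_le _ _
      _ = a * ‖spatialPart n x‖ + b * ‖spatialPart n y‖ := by
          rw [norm_smul, norm_smul, Real.norm_eq_abs, Real.norm_eq_abs, abs_of_nonneg ha,
            abs_of_nonneg hb]
  have hz : (a • x + b • y) 0 = a * x 0 + b * y 0 := rfl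
  rw [hz]
  rcases lt_or_ge 0 a with hpa | hpa
  · have h1 : a * ‖spatialPart n x‖ < a * (s * x 0) := by
      exact (mul_lt_mul_iff_right₀ hpa).2 hx
    have h2 : b * ‖spatialPart n y‖ ≤ b * (s * y 0) := by
      exact mul_le_mul_of_nonneg_left hy.le hb
    calc ‖spatialPart n (a • x + b • y)‖ ≤ _ := htr
      _ < s * (a * x 0 + b * y 0) := by ring_nf; nlinarith
  · have ha0 : a = 0 := le_antisymm hpa ha
    have hb1 : b = 1 := by linarith
    subst ha0 hb1
    simpa using hy

/-- The timecone `τ = {x : g(x,x) < 0}` is the union of the two disjoint, nonempty,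
open, connected sets `τ⁺ = {x ∈ τ : x 0 > 0}` and `τ⁻ = {x ∈ τ : x 0 < 0}`;
consequently the connected components of `τ` are exactly `τ⁺` and `τ⁻`. -/
theorem timecone_two_components (n : ℕ) (hn : 1 ≤ n) :
    ∀ τ τp τm : Set (Fin (n + 1) → ℝ),
      τ = {x | minkowskiForm n x x < 0} →
      τp = {x | minkowskiForm n x x < 0 ∧ 0 < x 0} →
      τm = {x | minkowskiForm n x x < 0 ∧ x 0 < 0} →
      τ = τp ∪ τm ∧ Disjoint τp τm ∧ τp.Nonempty ∧ τm.Nonempty ∧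
      IsOpen τp ∧ IsOpen τm ∧ IsConnected τp ∧ IsConnected τm ∧
      (∀ x ∈ τ, connectedComponentIn τ x = τp ∨ connectedComponentIn τ x = τm) := by
  intro τ τp τm hτ hτp hτm
  -- descriptions via norms
  have hp_eq : τp = {x : Fin (n + 1) → ℝ | ‖spatialPart n x‖ < 1 * x 0} := by
    rw [hτp]; ext x
    simpa using mink_iff n x (x 0) rfl
  have hm_eq : τm = {x : Fin (n + 1) → ℝ | ‖spatialPart n x‖ < (-1) * x 0} := by
    rw [hτm]; ext x
    have := mink_iff n x (-(x 0)) (by ring)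
    simp only [mem_setOf_eq, neg_mul, one_mul]
    rw [← this]
    constructor <;> rintro ⟨h1, h2⟩ <;> exact ⟨h1, by linarith⟩
  -- basic continuity
  have hcont : Continuous fun x : Fin (n + 1) → ℝ => minkowskiForm n x x := by
    unfold minkowskiForm; fun_prop
  have hopen_p : IsOpen τp := by
    rw [hτp]
    exact (isOpen_lt hcont continuous_const).inter
      (isOpen_lt continuous_const (continuous_apply 0))
  have hopen_m : IsOpen τm := by
    rw [hτm]
    exact (isOpen_lt hcont continuous_const).inter
      (isOpen_lt (continuous_apply 0) continuous_const)
  -- nonemptiness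
  have he : minkowskiForm n (fun i => if i = 0 then (1:ℝ) else 0) (fun i => if i = 0 then (1:ℝ) else 0) = -1 := by
    unfold minkowskiForm
    simp [Fin.succ_ne_zero]
  have hne_p : τp.Nonempty := by
    refine ⟨fun i => if i = 0 then 1 else 0, ?_⟩
    rw [hτp]; exact ⟨by rw [he]; norm_num, by norm_num⟩
  have he' : minkowskiForm n (fun i => if i = 0 then (-1:ℝ) else 0) (fun i => if i = 0 then (-1:ℝ) else 0) = -1 := by
    unfold minkowskiForm
    simp [Fin.succ_ne_zero]
  have hne_m : τm.Nonempty := by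
    refine ⟨fun i => if i = 0 then -1 else 0, ?_⟩
    rw [hτm]; exact ⟨by rw [he']; norm_num, by norm_num⟩
  -- union
  have hunion : τ = τp ∪ τm := by
    rw [hτ, hτp, hτm]; ext x
    simp only [mem_setOf_eq, mem_union]
    constructor
    · intro hx
      have hsum : (0:ℝ) ≤ ∑ i : Fin n, x i.succ * x i.succ := Finset.sum_nonneg fun i _ => mul_self_nonneg _
      have hx0 : x 0 ≠ 0 := by
        intro h0
        unfold minkowskiForm at hx
        rw [h0] at hx; nlinarith
      rcases hx0.lt_or_gt with h | h
      · exact Or.inr ⟨hx, h⟩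
      · exact Or.inl ⟨hx, h⟩
    · rintro (⟨h, _⟩ | ⟨h, _⟩) <;> exact h
  -- disjoint
  have hdisj : Disjoint τp τm := by
    rw [hτp, hτm, disjoint_left]
    rintro x ⟨_, h1⟩ ⟨_, h2⟩
    exact absurd (h1.trans h2) (lt_irrefl _)
  -- connected
  have hconn_p : IsConnected τp := by
    rw [hp_eq]
    exact (convex_cone n 1).isConnected (hp_eq ▸ hne_p)
  have hconn_m : IsConnected τm := by
    rw [hm_eq]
    exact (convex_cone n (-1)).isConnected (hm_eq ▸ hne_m)
  refine ⟨hunion, hdisj, hne_p, hne_m, hopen_p, hopen_m, hconn_p, hconn_m, ?_⟩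
  intro x hx
  have hxin : x ∈ τp ∪ τm := hunion ▸ hx
  have hsub : connectedComponentIn τ x ⊆ τp ∪ τm := (connectedComponentIn_subset τ x).trans hunion.subset
  rcases hxin with hxp | hxm
  · left
    refine le_antisymm ?_ ?_
    · exact (isPreconnected_connectedComponentIn).subset_left_of_subset_union hopen_p hopen_m
        hdisj hsub ⟨x, mem_connectedComponentIn hx, hxp⟩
    · exact hconn_p.isPreconnected.subset_connectedComponentIn hxp (hunion ▸ subset_union_left)
  · right
    refine le_antisymm ?_ ?_
    · exact (isPreconnected_connectedComponentIn).subset_right_of_subset_union hopen_p hopen_m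
        hdisj hsub ⟨x, mem_connectedComponentIn hx, hxm⟩
    · exact hconn_m.isPreconnected.subset_connectedComponentIn hxm (hunion ▸ subset_union_right)
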